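/- Let h : [0,∞) → [0,∞) be monotonically decreasing, integrable over bounded sets, and let Z = Z(2L,δ) = {x ∈ ℝ^d : x_1 ∈ [−L, L], |(0,x_2,…,x_d)| ≤ δ} be a cylinder of length 2L and radius δ centered at the origin. Then (1/λ(Z)^2) ∫_{Z×Z} h(|x−y|) dx dy ≤ (1/(2L)) ∫_{−L}^{L} h(|r|) dr. -/

import Mathlib

open MeasureTheory Filter Topology

/-- The cylinder `Z(2L,δ) = {x ∈ ℝ^d : x_1 ∈ [−L,L], |(0,x_2,…,x_d)| ≤ δ}`,
centered at the origin, of length `2L` and radius `δ`. -/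
def Cylinder (d : ℕ) [NeZero d] (L δ : ℝ) : Set (EuclideanSpace ℝ (Fin d)) :=
  {x | x 0 ∈ Set.Icc (-L) L ∧
    Real.sqrt (∑ i ∈ Finset.univ.erase (0 : Fin d), (x i) ^ 2) ≤ δ}

open Set ENNReal

/-! Extend `h` to an antitone function `H` on `ℝ`. Since `|x₀ - y₀| ≤ ‖x - y‖`, the integrand is
at most `H |x₀ - y₀|`, which only sees first coordinates. The first coordinate pushes Lebesgue
measure on the cylinder forward to `vol(B_δ) • λ` on `[-L, L]`, so the double average is at most
`(2L)⁻² ∫∫_{[-L,L]²} H |s - t|`. For fixed `t`, `∫_{-L}^{L} H |s - t| ds` integrates `H |·|` over a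
window of length `2L` centred at `-t` instead of `0`, and `H |·|` is largest near `0`. -/

section Antitone

variable {H : ℝ → ℝ}

theorem Antitone.integrable_comp_of_nonneg {X : Type*} [MeasurableSpace X] {μ : Measure X}
    [IsFiniteMeasure μ] (hH : Antitone H) (hH0 : ∀ s, 0 ≤ H s) {f : X → ℝ}
    (hf : Measurable f) (hf0 : ∀ x, 0 ≤ f x) : Integrable (fun x => H (f x)) μ :=
  .of_bound (hH.measurable.comp hf).aestronglyMeasurable (H 0) <| ae_of_all _ fun x => by
    rw [Real.norm_of_nonneg (hH0 _)]
    exact hH (hf0 x)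

theorem Antitone.intervalIntegrable_comp_abs (hH : Antitone H) (hH0 : ∀ s, 0 ≤ H s) (a b : ℝ) :
    IntervalIntegrable (fun r => H |r|) volume a b :=
  ⟨hH.integrable_comp_of_nonneg hH0 measurable_abs abs_nonneg,
    hH.integrable_comp_of_nonneg hH0 measurable_abs abs_nonneg⟩

/-- Sliding the window `[-L, L]` to the left by `t` trades `[L - t, L]`, where `H |r| ≥ H L`,
for `[-L - t, -L]`, where `H |r| ≤ H L`. -/
theorem Antitone.integral_comp_abs_shift_le_of_nonneg (hH : Antitone H) (hH0 : ∀ s, 0 ≤ H s)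
    {L t : ℝ} (ht0 : 0 ≤ t) (htL : t ≤ L) :
    ∫ r in (-L - t)..(L - t), H |r| ≤ ∫ r in (-L)..L, H |r| := by
  have hI := hH.intervalIntegrable_comp_abs hH0
  have hleft : ∫ r in (-L - t)..(-L), H |r| ≤ ∫ _ in (-L - t)..(-L), H L :=
    intervalIntegral.integral_mono_on (by linarith) (hI _ _) intervalIntegrable_const
      fun r hr => hH (by rw [abs_of_nonpos (by linarith [hr.2])]; linarith [hr.2])
  have hright : ∫ _ in (L - t)..L, H L ≤ ∫ r in (L - t)..L, H |r| :=
    intervalIntegral.integral_mono_on (by linarith) intervalIntegrable_const (hI _ _)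
      fun r hr => hH (by rw [abs_of_nonneg (by linarith [hr.1])]; exact hr.2)
  have hdiff := intervalIntegral.integral_interval_sub_interval_comm (hI (-L - t) (L - t))
    (hI (-L) L) (hI (-L - t) (-L))
  simp only [intervalIntegral.integral_const, smul_eq_mul] at hleft hright
  linarith

theorem Antitone.integral_comp_abs_sub_le (hH : Antitone H) (hH0 : ∀ s, 0 ≤ H s)
    {L t : ℝ} (ht : t ∈ Icc (-L) L) :
    ∫ s in (-L)..L, H |s - t| ≤ ∫ s in (-L)..L, H |s| := by
  rw [intervalIntegral.integral_comp_sub_right (fun s => H |s|)]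
  rcases le_total 0 t with ht0 | ht0
  · exact hH.integral_comp_abs_shift_le_of_nonneg hH0 ht0 ht.2
  · have hreflect : ∫ r in (-L - t)..(L - t), H |r| = ∫ r in (-L - -t)..(L - -t), H |r| := by
      have := intervalIntegral.integral_comp_neg (a := -L - -t) (b := L - -t) (fun r => H |r|)
      simp only [abs_neg] at this
      rw [this]
      congr 1 <;> ring
    rw [hreflect]
    exact hH.integral_comp_abs_shift_le_of_nonneg hH0 (by linarith) (by linarith [ht.1])

theorem Antitone.integral_prod_comp_abs_sub_le (hH : Antitone H) (hH0 : ∀ s, 0 ≤ H s)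
    {L : ℝ} (hL : 0 ≤ L) :
    ∫ q, H |q.1 - q.2| ∂((volume.restrict (Icc (-L) L)).prod (volume.restrict (Icc (-L) L)))
      ≤ 2 * L * ∫ r in (-L)..L, H |r| := by
  rw [integral_prod _ (hH.integrable_comp_of_nonneg hH0 (by fun_prop) fun _ => abs_nonneg _)]
  have hinner : ∀ s ∈ Icc (-L) L, ‖∫ t in Icc (-L) L, H |s - t|‖ ≤ ∫ r in (-L)..L, H |r| := by
    intro s hs
    rw [Real.norm_of_nonneg (integral_nonneg fun _ => hH0 _), integral_Icc_eq_integral_Ioc,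
      ← intervalIntegral.integral_of_le (by linarith)]
    simp_rw [abs_sub_comm s]
    exact hH.integral_comp_abs_sub_le hH0 hs
  calc _ ≤ ‖∫ s in Icc (-L) L, ∫ t in Icc (-L) L, H |s - t|‖ := Real.le_norm_self _
    _ ≤ (∫ r in (-L)..L, H |r|) * volume.real (Icc (-L) L) :=
      norm_setIntegral_le_of_norm_le_const measure_Icc_lt_top hinner
    _ = 2 * L * ∫ r in (-L)..L, H |r| := by
      rw [Real.volume_real_Icc_of_le (by linarith)]
      ring

end Antitone

theorem integral_comp_prodMap_of_map_eq_smul {X α : Type*} [MeasurableSpace X]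
    [MeasurableSpace α] {μ : Measure X} [SFinite μ] {ν : Measure α} [SFinite ν] {p : X → α}
    (hp : Measurable p) {c : ℝ≥0∞} (hμν : μ.map p = c • ν) {G : α × α → ℝ} (hG : Measurable G) :
    ∫ q, G (p q.1, p q.2) ∂(μ.prod μ) = c.toReal ^ 2 * ∫ q, G q ∂(ν.prod ν) := by
  change ∫ q, G (Prod.map p p q) ∂(μ.prod μ) = _
  rw [← integral_map (hp.prodMap hp).aemeasurable hG.aestronglyMeasurable,
    ← Measure.map_prod_map _ _ hp hp, hμν, Measure.prod_smul_right, Measure.prod_smul_left,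
    smul_smul, integral_smul_measure, ENNReal.toReal_mul, smul_eq_mul, sq]

theorem EuclideanSpace.measurePreserving_head_tail (n : ℕ) :
    MeasurePreserving (fun x : EuclideanSpace ℝ (Fin (n + 1)) =>
      (x 0, WithLp.toLp 2 fun j : Fin n => x j.succ)) volume (volume.prod volume) := by
  have hsplit := measurePreserving_piFinSuccAbove (fun _ : Fin (n + 1) => (volume : Measure ℝ)) 0
  rw [← volume_pi, ← volume_pi] at hsplit
  exact ((MeasurePreserving.id volume).prod (PiLp.volume_preserving_toLp (Fin n))).comp
    (hsplit.comp (PiLp.volume_preserving_ofLp _))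

theorem map_restrict_cylinder (n : ℕ) (L δ : ℝ) :
    (volume.restrict (Cylinder (n + 1) L δ)).map (fun x => x 0) =
      volume (Metric.closedBall (0 : EuclideanSpace ℝ (Fin n)) δ) •
        volume.restrict (Icc (-L) L) := by
  set ψ := fun x : EuclideanSpace ℝ (Fin (n + 1)) => (x 0, WithLp.toLp 2 fun j : Fin n => x j.succ)
  have hψ := EuclideanSpace.measurePreserving_head_tail n
  have hS : MeasurableSet (Icc (-L) L ×ˢ Metric.closedBall (0 : EuclideanSpace ℝ (Fin n)) δ) :=
    measurableSet_Icc.prod Metric.isClosed_closedBall.measurableSet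
  have hZ : Cylinder (n + 1) L δ = ψ ⁻¹' (Icc (-L) L ×ˢ Metric.closedBall 0 δ) := by
    ext x
    simp [ψ, Cylinder, EuclideanSpace.norm_eq, Finset.sum_erase_eq_sub, Fin.sum_univ_succ]
  calc _ = ((volume.restrict (ψ ⁻¹' (Icc (-L) L ×ˢ Metric.closedBall 0 δ))).map ψ).map
          Prod.fst := by
        rw [Measure.map_map measurable_fst hψ.measurable, hZ]
        rfl
    _ = _ := by
      rw [← Measure.restrict_map hψ.measurable hS, hψ.map_eq, ← Measure.prod_restrict,
        Measure.map_fst_prod, Measure.restrict_apply_univ]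

theorem volume_cylinder (n : ℕ) (L δ : ℝ) :
    volume (Cylinder (n + 1) L δ) =
      volume (Metric.closedBall (0 : EuclideanSpace ℝ (Fin n)) δ) * ENNReal.ofReal (2 * L) := by
  have hmass := congrArg (· univ) (map_restrict_cylinder n L δ)
  simp only [Measure.map_apply (by fun_prop : Measurable fun x : EuclideanSpace ℝ (Fin (n + 1)) =>
    x 0) MeasurableSet.univ, preimage_univ, Measure.restrict_apply_univ, Measure.smul_apply,
    smul_eq_mul, Real.volume_Icc] at hmass
  rw [hmass, show L - -L = 2 * L by ring]

theorem Antitone.integral_cylinder_prod_le {H : ℝ → ℝ} (hH : Antitone H) (hH0 : ∀ s, 0 ≤ H s)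
    (n : ℕ) {L : ℝ} (hL : 0 ≤ L) (δ : ℝ) :
    ∫ p in Cylinder (n + 1) L δ ×ˢ Cylinder (n + 1) L δ, H ‖p.1 - p.2‖ ∂(volume.prod volume)
      ≤ (volume (Metric.closedBall (0 : EuclideanSpace ℝ (Fin n)) δ)).toReal ^ 2 *
          (2 * L * ∫ r in (-L)..L, H |r|) := by
  set Z := Cylinder (n + 1) L δ
  have : IsFiniteMeasure (volume.restrict Z) := isFiniteMeasure_restrict.2 <| by
    rw [volume_cylinder n L δ]
    exact mul_ne_top measure_closedBall_lt_top.ne ofReal_ne_top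
  have hcoord : ∫ p in Z ×ˢ Z, H ‖p.1 - p.2‖ ∂(volume.prod volume)
      ≤ ∫ p, H |p.1 0 - p.2 0| ∂((volume.restrict Z).prod (volume.restrict Z)) := by
    rw [← Measure.prod_restrict]
    refine integral_mono (hH.integrable_comp_of_nonneg hH0 (by fun_prop) fun _ => norm_nonneg _)
      (hH.integrable_comp_of_nonneg hH0 (by fun_prop) fun _ => abs_nonneg _) fun p => hH ?_
    simpa using PiLp.norm_apply_le (p.1 - p.2) 0
  rw [integral_comp_prodMap_of_map_eq_smul (by fun_prop) (map_restrict_cylinder n L δ)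
    (G := fun q => H |q.1 - q.2|) (hH.measurable.comp (by fun_prop))] at hcoord
  exact hcoord.trans (by gcongr; exact hH.integral_prod_comp_abs_sub_le hH0 hL)

theorem cylinder_double_average_le_general
    {d : ℕ} [NeZero d]
    (h : ℝ → ℝ) (hmono : AntitoneOn h (Set.Ici 0))
    (hnonneg : ∀ s : ℝ, 0 ≤ s → 0 ≤ h s)
    (L δ : ℝ) (hL : 0 < L) :
    (1 / (volume (Cylinder d L δ)).toReal ^ 2) *
        ∫ p in Cylinder d L δ ×ˢ Cylinder d L δ, h ‖p.1 - p.2‖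
          ∂((volume : Measure (EuclideanSpace ℝ (Fin d))).prod volume)
      ≤ (1 / (2 * L)) * ∫ r in (-L)..L, h |r| := by
  obtain ⟨n, rfl⟩ : ∃ n, d = n + 1 := ⟨d - 1, (Nat.succ_pred_eq_of_ne_zero (NeZero.ne d)).symm⟩
  set H : ℝ → ℝ := fun s => h (max s 0)
  have hH : Antitone H := fun a b hab =>
    hmono (le_max_right a 0) (le_max_right b 0) (max_le_max_right 0 hab)
  have hH0 : ∀ s, 0 ≤ H s := fun s => hnonneg _ (le_max_right s 0)
  have hHh : ∀ s, 0 ≤ s → h s = H s := fun s hs => congrArg h (max_eq_left hs).symm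
  rw [integral_congr_ae (ae_of_all _ fun p => hHh _ (norm_nonneg _)),
    intervalIntegral.integral_congr fun r _ => hHh _ (abs_nonneg r),
    volume_cylinder n L δ, toReal_mul, toReal_ofReal (by positivity)]
  set C := (volume (Metric.closedBall (0 : EuclideanSpace ℝ (Fin n)) δ)).toReal
  set M := ∫ r in (-L)..L, H |r|
  have hM : 0 ≤ M := intervalIntegral.integral_nonneg (by linarith) fun _ _ => hH0 _
  calc _ ≤ 1 / (C * (2 * L)) ^ 2 * (C ^ 2 * (2 * L * M)) := by
        gcongr
        exact hH.integral_cylinder_prod_le hH0 n hL.le δ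
    -- `C = 0` when `δ < 0`; then `C ^ 2 / C ^ 2 = 0`, so no case split is needed.
    _ = C ^ 2 / C ^ 2 * (2 * L * M / (2 * L) ^ 2) := by ring
    _ ≤ 1 * (2 * L * M / (2 * L) ^ 2) := by gcongr; exact div_self_le_one _
    _ = 1 / (2 * L) * M := by field_simp

/-- Lemma 4.1(ii): for decreasing `h ≥ 0`, the average of `h(|x−y|)` over the square of
the cylinder `Z(2L,δ)` is bounded by the one-dimensional average of `h(|r|)` over
`[−L,L]`. -/
theorem cylinder_double_average_le
    {d : ℕ} [NeZero d] (hd : 2 ≤ d)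
    (h : ℝ → ℝ) (hmono : AntitoneOn h (Set.Ici 0))
    (hnonneg : ∀ s : ℝ, 0 ≤ s → 0 ≤ h s)
    (hint : ∀ R : ℝ, 0 < R → IntegrableOn h (Set.Icc 0 R) volume)
    (L δ : ℝ) (hL : 0 < L) (hδ : 0 < δ) :
    (1 / (volume (Cylinder d L δ)).toReal ^ 2) *
        ∫ p in Cylinder d L δ ×ˢ Cylinder d L δ, h ‖p.1 - p.2‖
          ∂((volume : Measure (EuclideanSpace ℝ (Fin d))).prod volume)
      ≤ (1 / (2 * L)) * ∫ r in (-L)..L, h |r| :=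
  cylinder_double_average_le_general h hmono hnonneg L δ hL
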